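/- For every positive integer m, every μ > 0, and every α < α_m(μ), the complete root structure of h_{m,μ,α} is: there exist real numbers z₁ < z₂ < 0 and a complex number w with Re w > 0 and Im w > 0, such that for every z ∈ ℂ, h_{m,μ,α}(z) = 0 if and only if z ∈ {z₁, z₂, w, w̄}. In particular h_{m,μ,α} has exactly two real roots, both negative, and its two nonreal roots are complex conjugates with positive real part. -/
import Mathlib


/-- The characteristic quartic `h_{m,μ,α}(z) = z⁴ − 2m²z² − αz + m⁴ + μm²` of the ODE
`ψ⁗ − 2m²ψ″ − αψ′ + (m⁴ + μm²)ψ = 0`, viewed as a complex polynomial function. -/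
noncomputable def hQuarticC (m : ℕ) (μ α : ℝ) : ℂ → ℂ :=
  fun z => z ^ 4 - 2 * (m : ℂ) ^ 2 * z ^ 2 - (α : ℂ) * z + (m : ℂ) ^ 4 + (μ : ℂ) * (m : ℂ) ^ 2

/-- The critical value
`α_m(μ) = −(4m/(3√3)) (√(4m² + 3μ) − 2m) √(m² + m√(4m² + 3μ))`. -/
noncomputable def alphaCrit (m : ℕ) (μ : ℝ) : ℝ :=
  -(4 * (m : ℝ) / (3 * Real.sqrt 3)) * (Real.sqrt (4 * (m : ℝ) ^ 2 + 3 * μ) - 2 * (m : ℝ)) *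
    Real.sqrt ((m : ℝ) ^ 2 + (m : ℝ) * Real.sqrt (4 * (m : ℝ) ^ 2 + 3 * μ))

/-- Factorization of the complex quartic once two distinct real roots are known. -/
lemma factorC (M μ α z₁ z₂ : ℝ) (hne : z₁ ≠ z₂)
    (h1 : z₁ ^ 4 - 2 * M ^ 2 * z₁ ^ 2 - α * z₁ + (M ^ 4 + μ * M ^ 2) = 0)
    (h2 : z₂ ^ 4 - 2 * M ^ 2 * z₂ ^ 2 - α * z₂ + (M ^ 4 + μ * M ^ 2) = 0) (z : ℂ) :
    z ^ 4 - 2 * (M : ℂ) ^ 2 * z ^ 2 - (α : ℂ) * z + ((M : ℂ) ^ 4 + (μ : ℂ) * (M : ℂ) ^ 2) =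
      (z - z₁) * (z - z₂) *
        (z ^ 2 + ((z₁ : ℂ) + z₂) * z + ((z₁ : ℂ) ^ 2 + z₁ * z₂ + z₂ ^ 2 - 2 * M ^ 2)) := by
  have h1C : (z₁ : ℂ) ^ 4 - 2 * (M : ℂ) ^ 2 * (z₁ : ℂ) ^ 2 - (α : ℂ) * z₁ +
      ((M : ℂ) ^ 4 + (μ : ℂ) * (M : ℂ) ^ 2) = 0 := by exact_mod_cast h1
  have h2C : (z₂ : ℂ) ^ 4 - 2 * (M : ℂ) ^ 2 * (z₂ : ℂ) ^ 2 - (α : ℂ) * z₂ +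
      ((M : ℂ) ^ 4 + (μ : ℂ) * (M : ℂ) ^ 2) = 0 := by exact_mod_cast h2
  have hneC : (z₁ : ℂ) - z₂ ≠ 0 := sub_ne_zero.mpr (by exact_mod_cast hne)
  have key : ((z₁ : ℂ) - z₂) *
      ((z ^ 4 - 2 * (M : ℂ) ^ 2 * z ^ 2 - (α : ℂ) * z + ((M : ℂ) ^ 4 + (μ : ℂ) * (M : ℂ) ^ 2)) -
        (z - z₁) * (z - z₂) *
          (z ^ 2 + ((z₁ : ℂ) + z₂) * z + ((z₁ : ℂ) ^ 2 + z₁ * z₂ + z₂ ^ 2 - 2 * M ^ 2))) = 0 := by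
    linear_combination (z - (z₂ : ℂ)) * h1C - (z - (z₁ : ℂ)) * h2C
  exact sub_eq_zero.mp ((mul_eq_zero.mp key).resolve_left hneC)

set_option maxHeartbeats 1000000 in
/-- For every positive integer `m`, every `μ > 0`, and every `α < α_m(μ)`, the complete
root structure of `h_{m,μ,α}`: there exist real numbers `z₁ < z₂ < 0` and a complex
number `w` with `Re w > 0` and `Im w > 0`, such that for every `z ∈ ℂ`,
`h_{m,μ,α}(z) = 0` if and only if `z ∈ {z₁, z₂, w, conj w}`. In particular `h_{m,μ,α}`
has exactly two real roots, both negative, and its two nonreal roots are complex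
conjugates with positive real part. -/
theorem quartic_root_structure_below_alphaCrit (m : ℕ) (hm : 0 < m) (μ : ℝ) (hμ : 0 < μ)
    (α : ℝ) (hα : α < alphaCrit m μ) :
    ∃ z₁ z₂ : ℝ, z₁ < z₂ ∧ z₂ < 0 ∧
      ∃ w : ℂ, 0 < w.re ∧ 0 < w.im ∧
        ∀ z : ℂ, hQuarticC m μ α z = 0 ↔
          (z = (z₁ : ℂ) ∨ z = (z₂ : ℂ) ∨ z = w ∨ z = (starRingEnd ℂ) w) := by
  set M : ℝ := (m : ℝ) with hMdef
  have hM0 : (0 : ℝ) < M := by rw [hMdef]; exact_mod_cast hm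
  set R : ℝ := Real.sqrt (4 * M ^ 2 + 3 * μ) with hRdef
  have hR2 : R ^ 2 = 4 * M ^ 2 + 3 * μ := Real.sq_sqrt (by positivity)
  have hR0 : 0 < R := Real.sqrt_pos.mpr (by positivity)
  have hR2M : 2 * M < R := by nlinarith
  set t : ℝ := Real.sqrt ((M ^ 2 + M * R) / 3) with htdef
  have hu0 : (0 : ℝ) < (M ^ 2 + M * R) / 3 := by positivity
  have ht0 : 0 < t := Real.sqrt_pos.mpr hu0
  have ht2 : t ^ 2 = (M ^ 2 + M * R) / 3 := Real.sq_sqrt hu0.le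
  have h3 : Real.sqrt 3 ^ 2 = 3 := Real.sq_sqrt (by norm_num)
  have h3pos : 0 < Real.sqrt 3 := Real.sqrt_pos.mpr (by norm_num)
  have hsqrt : Real.sqrt (M ^ 2 + M * R) = Real.sqrt 3 * t := by
    rw [htdef, ← Real.sqrt_mul (by norm_num : (0:ℝ) ≤ 3)]
    congr 1
    ring
  -- expression of the critical value
  have hαc : alphaCrit m μ = -(4 * M / 3) * (R - 2 * M) * t := by
    rw [alphaCrit, ← hMdef, ← hRdef, hsqrt]
    field_simp
  have hαc0 : alphaCrit m μ < 0 := by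
    rw [hαc]
    have : 0 < (4 * M / 3) * (R - 2 * M) * t :=
      mul_pos (mul_pos (by positivity) (by linarith)) ht0
    linarith
  have hα0 : α < 0 := hα.trans hαc0
  -- positivity of the quartic on x ≥ 0
  have hfpos : ∀ x : ℝ, 0 ≤ x →
      0 < x ^ 4 - 2 * M ^ 2 * x ^ 2 - α * x + (M ^ 4 + μ * M ^ 2) := by
    intro x hx
    have h1 : 0 ≤ -α * x := mul_nonneg (by linarith) hx
    nlinarith [sq_nonneg (x ^ 2 - M ^ 2), mul_pos hμ (pow_pos hM0 2)]
  -- the quartic is negative at -t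
  have hfneg : (-t) ^ 4 - 2 * M ^ 2 * (-t) ^ 2 - α * (-t) + (M ^ 4 + μ * M ^ 2) < 0 := by
    have key : (-t) ^ 4 - 2 * M ^ 2 * (-t) ^ 2 - α * (-t) + (M ^ 4 + μ * M ^ 2)
        = t * ((4 * M / 3) * (R - 2 * M) * t + α) := by
      linear_combination (t ^ 2 + (M ^ 2 + M * R) / 3 - 2 * M ^ 2
        - 4 * M / 3 * (R - 2 * M)) * ht2 + (-(M ^ 2) / 3) * hR2
    rw [key]
    have h1 : (4 * M / 3) * (R - 2 * M) * t + α < 0 := by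
      rw [hαc] at hα
      linarith
    exact mul_neg_of_pos_of_neg ht0 h1
  -- a far-left point where the quartic is positive
  set B : ℝ := 1 + 2 * M ^ 2 - α + t with hBdef
  have hM2 : (0:ℝ) ≤ M ^ 2 := sq_nonneg M
  have hB1 : (1 : ℝ) ≤ B := by rw [hBdef]; linarith
  have hB2 : 2 * M ^ 2 + 1 ≤ B := by rw [hBdef]; linarith
  have hB3 : -α ≤ B := by rw [hBdef]; linarith
  have hB0 : 0 < B := by linarith
  have hfA : 0 < (-B) ^ 4 - 2 * M ^ 2 * (-B) ^ 2 - α * (-B) + (M ^ 4 + μ * M ^ 2) := by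
    have hBB : B * B = B ^ 2 := (sq B).symm
    have k1 : (2 * M ^ 2 + 1) * B ≤ B ^ 2 := by
      have := mul_le_mul_of_nonneg_right hB2 hB0.le
      linarith
    have k2 : 0 ≤ B ^ 2 + α := by
      have := mul_le_mul_of_nonneg_right hB1 hB0.le
      linarith
    have k3 : 0 ≤ B ^ 3 - 2 * M ^ 2 * B + α := by
      have h5 : (2 * M ^ 2 + 1) * B * B ≤ B ^ 2 * B := mul_le_mul_of_nonneg_right k1 hB0.le
      have h6 : B * 1 ≤ B * B := mul_le_mul_of_nonneg_left hB1 hB0.le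
      have h7 : (0:ℝ) ≤ 2 * M ^ 2 := by linarith
      have h8 : 2 * M ^ 2 * (B * 1) ≤ 2 * M ^ 2 * (B * B) := mul_le_mul_of_nonneg_left h6 h7
      linarith [h5, h8, k2, sq_abs B]
    have k4 : 0 ≤ B * (B ^ 3 - 2 * M ^ 2 * B + α) := mul_nonneg hB0.le k3
    have expand : (-B) ^ 4 - 2 * M ^ 2 * (-B) ^ 2 - α * (-B) + (M ^ 4 + μ * M ^ 2)
        = B * (B ^ 3 - 2 * M ^ 2 * B + α) + (M ^ 4 + μ * M ^ 2) := by ring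
    rw [expand]
    have : 0 < M ^ 4 + μ * M ^ 2 := by positivity
    linarith
  -- continuity
  have hcont : Continuous
      (fun x : ℝ => x ^ 4 - 2 * M ^ 2 * x ^ 2 - α * x + (M ^ 4 + μ * M ^ 2)) := by
    fun_prop
  -- first root in (-B, -t)
  have hBt : (-B : ℝ) ≤ -t := by rw [hBdef]; linarith
  obtain ⟨z₁, hz₁mem, hz₁⟩ :
      ∃ x ∈ Set.Ioo (-B : ℝ) (-t),
        x ^ 4 - 2 * M ^ 2 * x ^ 2 - α * x + (M ^ 4 + μ * M ^ 2) = 0 := by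
    have := intermediate_value_Ioo' hBt hcont.continuousOn (a := -B) (b := -t)
    obtain ⟨x, hx, hfx⟩ := this ⟨hfneg, hfA⟩
    exact ⟨x, hx, hfx⟩
  -- second root in (-t, 0)
  obtain ⟨z₂, hz₂mem, hz₂⟩ :
      ∃ x ∈ Set.Ioo (-t : ℝ) 0,
        x ^ 4 - 2 * M ^ 2 * x ^ 2 - α * x + (M ^ 4 + μ * M ^ 2) = 0 := by
    have h0 : (0:ℝ) < (0:ℝ) ^ 4 - 2 * M ^ 2 * (0:ℝ) ^ 2 - α * 0 + (M ^ 4 + μ * M ^ 2) :=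
      hfpos 0 le_rfl
    have := intermediate_value_Ioo (by linarith : (-t : ℝ) ≤ 0) hcont.continuousOn
    obtain ⟨x, hx, hfx⟩ := this ⟨hfneg, h0⟩
    exact ⟨x, hx, hfx⟩
  have hz₁t : z₁ < -t := hz₁mem.2
  have htz₂ : -t < z₂ := hz₂mem.1
  have hz₂0 : z₂ < 0 := hz₂mem.2
  have h12 : z₁ < z₂ := lt_trans hz₁t htz₂
  have hne : z₁ ≠ z₂ := ne_of_lt h12
  have hz₁0 : z₁ < 0 := lt_trans h12 hz₂0
  -- factorization over ℂ
  have hfact := factorC M μ α z₁ z₂ hne hz₁ hz₂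
  -- positivity of the discriminant of the quadratic factor
  set p : ℝ := z₁ ^ 2 + z₁ * z₂ + z₂ ^ 2 - 2 * M ^ 2 with hpdef
  set s : ℝ := z₁ + z₂ with hsdef
  have hs0 : s < 0 := by rw [hsdef]; linarith
  have hx₀ : (0:ℝ) ≤ -s / 2 := by linarith
  have hD : 0 < 4 * p - s ^ 2 := by
    rw [hpdef, hsdef]
    have hx0 : (0:ℝ) ≤ -(z₁ + z₂) / 2 := by linarith
    have hfx₀ := hfpos (-(z₁ + z₂) / 2) hx0
    have hfactR : (-(z₁ + z₂) / 2) ^ 4 - 2 * M ^ 2 * (-(z₁ + z₂) / 2) ^ 2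
          - α * (-(z₁ + z₂) / 2) + (M ^ 4 + μ * M ^ 2)
        = ((-(z₁ + z₂) / 2) - z₁) * ((-(z₁ + z₂) / 2) - z₂) *
          ((4 * (z₁ ^ 2 + z₁ * z₂ + z₂ ^ 2 - 2 * M ^ 2) - (z₁ + z₂) ^ 2) / 4) := by
      have key : (z₁ - z₂) *
          (((-(z₁ + z₂) / 2) ^ 4 - 2 * M ^ 2 * (-(z₁ + z₂) / 2) ^ 2
            - α * (-(z₁ + z₂) / 2) + (M ^ 4 + μ * M ^ 2))
          - ((-(z₁ + z₂) / 2) - z₁) * ((-(z₁ + z₂) / 2) - z₂) *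
            ((4 * (z₁ ^ 2 + z₁ * z₂ + z₂ ^ 2 - 2 * M ^ 2) - (z₁ + z₂) ^ 2) / 4)) = 0 := by
        linear_combination ((-(z₁ + z₂) / 2) - z₂) * hz₁ - ((-(z₁ + z₂) / 2) - z₁) * hz₂
      exact sub_eq_zero.mp ((mul_eq_zero.mp key).resolve_left (sub_ne_zero.mpr hne))
    rw [hfactR] at hfx₀
    have h1 : 0 < (-(z₁ + z₂) / 2) - z₁ := by linarith
    have h2 : 0 < (-(z₁ + z₂) / 2) - z₂ := by linarith
    have hP : 0 < ((-(z₁ + z₂) / 2) - z₁) * ((-(z₁ + z₂) / 2) - z₂) := mul_pos h1 h2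
    have hX : 0 < (4 * (z₁ ^ 2 + z₁ * z₂ + z₂ ^ 2 - 2 * M ^ 2) - (z₁ + z₂) ^ 2) / 4 := by
      by_contra hX
      push_neg at hX
      have hneg : 0 ≤ ((-(z₁ + z₂) / 2) - z₁) * ((-(z₁ + z₂) / 2) - z₂) *
          (-((4 * (z₁ ^ 2 + z₁ * z₂ + z₂ ^ 2 - 2 * M ^ 2) - (z₁ + z₂) ^ 2) / 4)) :=
        mul_nonneg hP.le (by linarith)
      linarith [hfx₀, hneg]
    linarith
  -- the complex roots
  set sq : ℝ := Real.sqrt (4 * p - s ^ 2) with hsqdef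
  have hsq0 : 0 < sq := Real.sqrt_pos.mpr hD
  have hsq2 : sq ^ 2 = 4 * p - s ^ 2 := Real.sq_sqrt hD.le
  refine ⟨z₁, z₂, h12, hz₂0, ((-s / 2 : ℝ) : ℂ) + ((sq / 2 : ℝ) : ℂ) * Complex.I, ?_, ?_, ?_⟩
  · simp
    linarith
  · simp
    linarith
  · intro z
    have hconj : (starRingEnd ℂ) (((-s / 2 : ℝ) : ℂ) + ((sq / 2 : ℝ) : ℂ) * Complex.I)
        = ((-s / 2 : ℝ) : ℂ) - ((sq / 2 : ℝ) : ℂ) * Complex.I := by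
      rw [map_add, map_mul, Complex.conj_ofReal, Complex.conj_ofReal, Complex.conj_I]
      ring
    have hquad : (z ^ 2 + ((z₁ : ℂ) + z₂) * z + ((z₁ : ℂ) ^ 2 + z₁ * z₂ + z₂ ^ 2 - 2 * M ^ 2))
        = (z - (((-s / 2 : ℝ) : ℂ) + ((sq / 2 : ℝ) : ℂ) * Complex.I)) *
          (z - (((-s / 2 : ℝ) : ℂ) - ((sq / 2 : ℝ) : ℂ) * Complex.I)) := by
      have hsq2C : ((sq : ℝ) : ℂ) ^ 2 = ((4 * p - s ^ 2 : ℝ) : ℂ) := by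
        exact_mod_cast congrArg (fun x : ℝ => (x : ℂ)) hsq2
      have hsC : ((s : ℝ) : ℂ) = (z₁ : ℂ) + z₂ := by rw [hsdef]; push_cast; ring
      have hpC : ((p : ℝ) : ℂ) = (z₁ : ℂ) ^ 2 + z₁ * z₂ + z₂ ^ 2 - 2 * M ^ 2 := by
        rw [hpdef]; push_cast; ring
      push_cast at hsq2C ⊢
      rw [← hsC, ← hpC] at *
      linear_combination (-(1:ℂ)/4) * hsq2C + (((sq : ℂ)/2) ^ 2) * Complex.I_sq
    have hlhs : hQuarticC m μ α z =
        z ^ 4 - 2 * (M : ℂ) ^ 2 * z ^ 2 - (α : ℂ) * z + ((M : ℂ) ^ 4 + (μ : ℂ) * (M : ℂ) ^ 2) := by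
      rw [hQuarticC, hMdef]
      push_cast
      ring
    rw [hlhs, hfact z, hquad, hconj]
    simp only [mul_eq_zero, sub_eq_zero]
    tauto
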